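/- arXiv:2407.05634 — 6 statements merged into one kernel-verified Lean document; each statement's English description precedes it below -/
import Mathlib

section
/- Let F : ℤ → ℂ be finitely supported and let (a,b) be its nonlinear Fourier transform. Then the constant (0-th) Fourier coefficient of the Laurent polynomial a equals ∏_{j∈ℤ} (1 + |F_j|²)^{−1/2}; in particular it is a positive real number. -/
open scoped BigOperators

/-- The `n`-th factor `(1+|F_n|²)^{−1/2}·[[1, F_n zⁿ],[−conj(F_n) z^{−n}, 1]]`
of the nonlinear Fourier transform. -/
noncomputable def nlftFactor (F : ℤ → ℂ) (n : ℤ) (z : ℂ) : Matrix (Fin 2) (Fin 2) ℂ :=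
  (((Real.sqrt (1 + ‖F n‖^2) : ℝ) : ℂ))⁻¹ •
    !![1, F n * z ^ n; -((starRingEnd ℂ) (F n)) * z ^ (-n), 1]

/-- The nonlinear Fourier transform matrix of `F` restricted to `[−d, d]`: the ordered
product of the factors, lower indices to the left. -/
noncomputable def nlftMat (F : ℤ → ℂ) (d : ℕ) (z : ℂ) : Matrix (Fin 2) (Fin 2) ℂ :=
  ((List.range (2 * d + 1)).map (fun j => nlftFactor F ((j : ℤ) - (d : ℤ)) z)).prod

/-!
Drop the normalising scalars, which only contribute the factor `∏ (1 + |F_n|²)^{-1/2}`. The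
product of the matrices `[[1, F_n T^n], [-conj(F_n) T^{-n}, 1]]` over `n = -d, …, d` has a
Laurent polynomial in its `(0, 0)` entry whose constant coefficient is `1`: multiplying on the
right by the factor of index `n` adds to that entry only `T^{-n}` times the `(0, 1)` entry, whose
frequencies all lie below `n`. Evaluating at `e^{iθ}` and averaging over the circle extracts
this constant coefficient.
-/

open LaurentPolynomial Complex Real

theorem Real.inv_sqrt_eq_rpow {x : ℝ} (hx : 0 ≤ x) : (√x)⁻¹ = x ^ (-(1 / 2) : ℝ) := by
  rw [Real.sqrt_eq_rpow, Real.rpow_neg hx]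

theorem List.prod_map_smul {ι M A : Type*} [CommMonoid M] [Monoid A] [MulAction M A]
    [IsScalarTower M A A] [SMulCommClass M A A] (l : List ι) (c : ι → M) (f : ι → A) :
    (l.map fun i => c i • f i).prod = (l.map c).prod • (l.map f).prod := by
  induction l with
  | nil => simp
  | cons i l ih => simp [ih, smul_mul_smul_comm]

theorem List.prod_map_range {M : Type*} [CommMonoid M] (f : ℕ → M) (n : ℕ) :
    ((List.range n).map f).prod = ∏ j ∈ Finset.range n, f j := by
  simp [Finset.prod_eq_multiset_prod, Finset.range_val, Multiset.range]

theorem tprod_int_eq_prod_range {M : Type*} [CommMonoid M] [TopologicalSpace M] (f : ℤ → M)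
    (d : ℕ) (hf : ∀ n : ℤ, d < n.natAbs → f n = 1) :
    ∏' n, f n = ∏ j ∈ Finset.range (2 * d + 1), f (j - d) := by
  let e : ℕ ↪ ℤ := ⟨fun j => j - d, fun i j h => by simpa using h⟩
  rw [tprod_eq_prod (s := (Finset.range (2 * d + 1)).map e), Finset.prod_map]
  · rfl
  · intro n hn
    refine hf n ?_
    by_contra! h
    refine hn (Finset.mem_map.2 ⟨(n + d).toNat, by simp; omega, ?_⟩)
    change ((n + d).toNat : ℤ) - d = n
    omega

theorem integral_exp_I_mul_zpow (n : ℤ) :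
    ∫ θ in (0 : ℝ)..2 * π, exp (I * θ) ^ n = if n = 0 then 2 * π else 0 := by
  split_ifs with hn
  · simp [hn]
  have hnI : (n : ℂ) * I ≠ 0 := by simp [hn]
  have hperiod : exp (n * I * (2 * π : ℝ)) = 1 := by
    rw [← exp_int_mul_two_pi_mul_I n]; push_cast; ring_nf
  simp_rw [← exp_int_mul, ← mul_assoc]
  rw [integral_exp_mul_complex hnI, hperiod]
  simp

noncomputable def circleUnit (θ : ℝ) : ℂˣ := Units.mk0 (exp (I * θ)) (exp_ne_zero _)

@[simp] theorem circleUnit_val (θ : ℝ) : (circleUnit θ : ℂ) = exp (I * θ) := rfl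

theorem continuous_eval₂_circleUnit (p : ℂ[T;T⁻¹]) :
    Continuous fun θ : ℝ => eval₂ (RingHom.id ℂ) (circleUnit θ) p := by
  induction p using LaurentPolynomial.induction_on' with
  | add p q hp hq => simp only [map_add]; exact hp.add hq
  | C_mul_T n a =>
    simp only [eval₂_C_mul_T, RingHom.id_apply, Units.val_zpow_eq_zpow_val, circleUnit_val]
    exact continuous_const.mul ((by fun_prop : Continuous fun θ : ℝ => exp (I * θ)).zpow₀ n
      fun θ => .inl (exp_ne_zero _))

theorem integral_eval₂_circleUnit (p : ℂ[T;T⁻¹]) :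
    ∫ θ in (0 : ℝ)..2 * π, eval₂ (RingHom.id ℂ) (circleUnit θ) p = 2 * π * p.coeff 0 := by
  induction p using LaurentPolynomial.induction_on' with
  | add p q hp hq =>
    simp only [map_add]
    rw [intervalIntegral.integral_add ((continuous_eval₂_circleUnit p).intervalIntegrable _ _)
      ((continuous_eval₂_circleUnit q).intervalIntegrable _ _), hp, hq]
    simp [mul_add]
  | C_mul_T n a =>
    simp only [eval₂_C_mul_T, RingHom.id_apply, Units.val_zpow_eq_zpow_val, circleUnit_val]
    rw [intervalIntegral.integral_const_mul, integral_exp_I_mul_zpow]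
    rw [← single_eq_C_mul_T, AddMonoidAlgebra.coeff_single]
    split_ifs with hn
    · simp [hn, mul_comm]
    · simp [Finsupp.single_eq_of_ne' hn]

theorem LaurentPolynomial.coeff_mul_C_mul_T {R : Type*} [Semiring R] (p : R[T;T⁻¹]) (a : R)
    (n k : ℤ) : (p * (C a * T n)).coeff k = p.coeff (k - n) * a := by
  rw [← single_eq_C_mul_T, AddMonoidAlgebra.coeff_mul_single_apply, sub_eq_add_neg]

noncomputable def nlftLaurentFactor (F : ℤ → ℂ) (n : ℤ) : Matrix (Fin 2) (Fin 2) ℂ[T;T⁻¹] :=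
  !![1, C (F n) * T n; -(C (starRingEnd ℂ (F n)) * T (-n)), 1]

noncomputable def nlftLaurentMat (F : ℤ → ℂ) (d : ℕ) : Matrix (Fin 2) (Fin 2) ℂ[T;T⁻¹] :=
  ((List.range (2 * d + 1)).map fun j : ℕ => nlftLaurentFactor F (j - d)).prod

-- The cast `(j : ℤ)` in `nlftMat` coerces the list `List.range (2 * d + 1)` itself to `List ℤ`.
theorem nlftMat_eq_prod_range (F : ℤ → ℂ) (d : ℕ) (z : ℂ) :
    nlftMat F d z = ((List.range (2 * d + 1)).map fun j : ℕ => nlftFactor F (j - d) z).prod := by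
  simp [nlftMat, ← List.map_eq_flatMap, List.map_map, Function.comp_def]

theorem nlftFactor_eq_smul_map (F : ℤ → ℂ) (n : ℤ) (u : ℂˣ) :
    nlftFactor F n u = (((1 + ‖F n‖ ^ 2) ^ (-(1 / 2) : ℝ) : ℝ) : ℂ) •
      (eval₂ (RingHom.id ℂ) u).mapMatrix (nlftLaurentFactor F n) := by
  rw [nlftFactor, ← Complex.ofReal_inv, Real.inv_sqrt_eq_rpow (by positivity)]
  congr 1
  ext i j
  fin_cases i <;> fin_cases j <;> simp [nlftLaurentFactor, Units.val_zpow_eq_zpow_val]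

theorem nlftMat_eq_smul_map (F : ℤ → ℂ) (d : ℕ) (u : ℂˣ) :
    nlftMat F d u = ((∏ j ∈ Finset.range (2 * d + 1),
        (1 + ‖F (j - d)‖ ^ 2) ^ (-(1 / 2) : ℝ) : ℝ) : ℂ) •
      (eval₂ (RingHom.id ℂ) u).mapMatrix (nlftLaurentMat F d) := by
  rw [nlftMat_eq_prod_range]
  simp_rw [nlftFactor_eq_smul_map, List.prod_map_smul, nlftLaurentMat, map_list_prod,
    List.map_map, List.prod_map_range, Complex.ofReal_prod]
  rfl

def FirstRowShape (N : ℤ) (P : Matrix (Fin 2) (Fin 2) ℂ[T;T⁻¹]) : Prop :=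
  (P 0 0).coeff 0 = 1 ∧ (∀ k, 0 < k → (P 0 0).coeff k = 0) ∧ ∀ k, N ≤ k → (P 0 1).coeff k = 0

theorem firstRowShape_one (N : ℤ) : FirstRowShape N 1 := by
  refine ⟨?_, fun k hk => ?_, fun k _ => ?_⟩ <;> simp [← T_zero, T_apply]
  omega

theorem FirstRowShape.mul_nlftLaurentFactor {N : ℤ} {P : Matrix (Fin 2) (Fin 2) ℂ[T;T⁻¹]}
    (hP : FirstRowShape N P) (F : ℤ → ℂ) {n : ℤ} (hn : N ≤ n) :
    FirstRowShape (n + 1) (P * nlftLaurentFactor F n) := by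
  obtain ⟨h0, hpos, hb⟩ := hP
  have e00 : (P * nlftLaurentFactor F n) 0 0 =
      P 0 0 - P 0 1 * (C (starRingEnd ℂ (F n)) * T (-n)) := by
    simp [Matrix.mul_apply, nlftLaurentFactor, sub_eq_add_neg]
  have e01 : (P * nlftLaurentFactor F n) 0 1 = P 0 0 * (C (F n) * T n) + P 0 1 := by
    simp [Matrix.mul_apply, nlftLaurentFactor]
  refine ⟨?_, fun k hk => ?_, fun k hk => ?_⟩
  · rw [e00, AddMonoidAlgebra.coeff_sub, Finsupp.sub_apply, coeff_mul_C_mul_T, h0,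
      hb _ (by omega)]
    simp
  · rw [e00, AddMonoidAlgebra.coeff_sub, Finsupp.sub_apply, coeff_mul_C_mul_T, hpos k hk,
      hb _ (by omega)]
    simp
  · rw [e01, AddMonoidAlgebra.coeff_add, Finsupp.add_apply, coeff_mul_C_mul_T,
      hpos _ (by omega), hb _ (by omega)]
    simp

theorem firstRowShape_prod_range (F : ℤ → ℂ) (m : ℤ) (J : ℕ) :
    FirstRowShape (J - m) ((List.range J).map fun j : ℕ => nlftLaurentFactor F (j - m)).prod := by
  induction J with
  | zero => exact firstRowShape_one _
  | succ J ih =>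
    rw [List.range_succ, List.map_append, List.prod_append]
    simpa [sub_add_eq_add_sub] using ih.mul_nlftLaurentFactor F le_rfl

theorem nlftLaurentMat_coeff_zero (F : ℤ → ℂ) (d : ℕ) : (nlftLaurentMat F d 0 0).coeff 0 = 1 :=
  (firstRowShape_prod_range F d (2 * d + 1)).1

/-- If `F : ℤ → ℂ` is finitely supported (within `[−d,d]`) and `(a,b)` is
its nonlinear Fourier transform, then the constant Fourier coefficient of the Laurent
polynomial `a` (i.e. its mean over the unit circle) equals
`∏_{j∈ℤ} (1+|F_j|²)^{−1/2}`, a positive real number. -/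
theorem stmt4 (F : ℤ → ℂ) (d : ℕ) (hF : ∀ n : ℤ, d < n.natAbs → F n = 0) :
    (1 / (2 * Real.pi) : ℂ) *
        (∫ θ in (0:ℝ)..(2 * Real.pi),
          (nlftMat F d (Complex.exp (Complex.I * θ))) 0 0)
      = ((∏' j : ℤ, ((1 + ‖F j‖^2) ^ (-(1/2) : ℝ)) : ℝ) : ℂ) ∧
    0 < ∏' j : ℤ, ((1 + ‖F j‖^2) ^ (-(1/2) : ℝ)) := by
  have hprod : ∏' j : ℤ, (1 + ‖F j‖ ^ 2) ^ (-(1 / 2) : ℝ) =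
      ∏ j ∈ Finset.range (2 * d + 1), (1 + ‖F (j - d)‖ ^ 2) ^ (-(1 / 2) : ℝ) :=
    tprod_int_eq_prod_range _ d fun n hn => by simp [hF n hn]
  have hint : ∫ θ in (0 : ℝ)..2 * π, nlftMat F d (exp (I * θ)) 0 0 =
      2 * π * (∏' j : ℤ, (1 + ‖F j‖ ^ 2) ^ (-(1 / 2) : ℝ) : ℝ) := by
    simp_rw [← circleUnit_val, nlftMat_eq_smul_map, Matrix.smul_apply, smul_eq_mul,
      RingHom.mapMatrix_apply, Matrix.map_apply]
    rw [intervalIntegral.integral_const_mul, integral_eval₂_circleUnit, nlftLaurentMat_coeff_zero,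
      hprod]
    ring
  refine ⟨?_, hprod ▸ Finset.prod_pos fun j _ => by positivity⟩
  rw [hint]
  field_simp
end

section
/- For every z ∈ A_r one has |b(z)·b*(z)| ≤ 1−η; consequently 1 − b(z)·b*(z) ≠ 0, the principal logarithm satisfies |Log(1 − b(z)·b*(z))| ≤ |log η|, and for z ∈ T, (1/2)·Log(1 − b(z)·b*(z)) = log√(1−|b(z)|²). In other words, z ↦ (1/2)·Log(1 − b(z)·b*(z)) is an analytic extension of log√(1−|b|²) from T to the annulus A_r, pointwise bounded by (1/2)·|log η|. -/
open scoped BigOperators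

/-- Evaluation of the Laurent polynomial `b(z) = ∑_{j=−d}^{d} c_j z^j`. -/
noncomputable def laurentEval (c : ℤ → ℂ) (d : ℕ) (z : ℂ) : ℂ :=
  ∑ j ∈ Finset.Icc (-(d : ℤ)) (d : ℤ), c j * z ^ j

/-- Evaluation of `b*(z) = ∑_{j=−d}^{d} conj(c_j) z^{−j}`. -/
noncomputable def laurentStarEval (c : ℤ → ℂ) (d : ℕ) (z : ℂ) : ℂ :=
  ∑ j ∈ Finset.Icc (-(d : ℤ)) (d : ℤ), (starRingEnd ℂ) (c j) * z ^ (-j)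

/-!
The function `z^{2d} b(z) b*(z)` is a polynomial, and on the unit circle its modulus is
`|b|² ≤ (1-η)²`. By the maximum modulus principle the same bound holds on the closed unit disk,
so `|b b*| ≤ (1-η)² / |z|^{2d} ≤ 1-η` as soon as `|z|^{2d} ≥ r^{-2d} = 1-η`. The reflection
`z ↦ 1/z̄` maps `b b*` to its complex conjugate and exchanges the two halves of the annulus.
Since `|b b*| ≤ 1-η < 1`, the logarithm of `1 - b b*` is controlled by its Taylor series, and on
the circle `1 - b b* = 1 - |b|²` is a positive real number.
-/

open ComplexConjugate

theorem Complex.norm_le_of_forall_norm_eq_one_norm_le {F : Type*} [NormedAddCommGroup F]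
    [NormedSpace ℂ F] {f : ℂ → F} (hf : Differentiable ℂ f)
    {C : ℝ} (hC : ∀ w : ℂ, ‖w‖ = 1 → ‖f w‖ ≤ C) {z : ℂ} (hz : ‖z‖ ≤ 1) : ‖f z‖ ≤ C := by
  refine Complex.norm_le_of_forall_mem_frontier_norm_le (U := Metric.ball 0 1)
    Metric.isBounded_ball hf.diffContOnCl (fun w hw => hC w ?_) ?_
  · rwa [frontier_ball 0 one_ne_zero, mem_sphere_zero_iff_norm] at hw
  · rwa [closure_ball 0 one_ne_zero, Metric.mem_closedBall, dist_zero_right]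

theorem Complex.norm_log_one_sub_le {u : ℂ} (hu : ‖u‖ < 1) :
    ‖Complex.log (1 - u)‖ ≤ -Real.log (1 - ‖u‖) := by
  have hnorm : ∀ n : ℕ, ‖u ^ n / (n : ℂ)‖ = ‖u‖ ^ n / n := fun n => by
    rw [norm_div, norm_pow, Complex.norm_natCast]
  have hreal : HasSum (fun n : ℕ => ‖u‖ ^ n / n) (-Real.log (1 - ‖u‖)) := by
    refine (hasSum_nat_add_iff' 1).mp ?_
    simpa using Real.hasSum_pow_div_log_of_abs_lt_one (by rwa [abs_norm])
  calc ‖Complex.log (1 - u)‖ = ‖∑' n : ℕ, u ^ n / (n : ℂ)‖ := by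
        rw [(Complex.hasSum_taylorSeries_neg_log hu).tsum_eq, norm_neg]
    _ ≤ ∑' n : ℕ, ‖u ^ n / (n : ℂ)‖ :=
        norm_tsum_le_tsum_norm (hreal.summable.congr fun n => (hnorm n).symm)
    _ = -Real.log (1 - ‖u‖) := (tsum_congr hnorm).trans hreal.tsum_eq

theorem Complex.half_mul_log_ofReal {t : ℝ} (ht : 0 ≤ t) :
    (1 / 2 : ℂ) * Complex.log t = (Real.log (Real.sqrt t) : ℂ) := by
  rw [← Complex.ofReal_log ht, Real.log_sqrt ht]
  push_cast
  ring

section Laurent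

variable (c : ℤ → ℂ) (d : ℕ)

/-- The polynomial `z^d b(z)`, written with natural exponents so that it is entire. -/
noncomputable def laurentNumerator (z : ℂ) : ℂ :=
  ∑ j ∈ Finset.Icc (-(d : ℤ)) (d : ℤ), c j * z ^ ((d : ℤ) + j).toNat

theorem differentiable_laurentNumerator : Differentiable ℂ (laurentNumerator c d) :=
  Differentiable.fun_sum fun _ _ => (differentiable_pow _).const_mul _

theorem laurentNumerator_eq {z : ℂ} (hz : z ≠ 0) :
    laurentNumerator c d z = z ^ d * laurentEval c d z := by
  rw [laurentNumerator, laurentEval, Finset.mul_sum]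
  refine Finset.sum_congr rfl fun j hj => ?_
  have hdj : 0 ≤ (d : ℤ) + j := by linarith [(Finset.mem_Icc.mp hj).1]
  rw [← zpow_natCast, Int.toNat_of_nonneg hdj, zpow_add₀ hz, zpow_natCast]
  ring

theorem laurentStarEval_eq_laurentEval :
    laurentStarEval c d = laurentEval (fun j => conj (c (-j))) d := by
  ext z
  refine Finset.sum_equiv (Equiv.neg ℤ) (fun j => ?_) (fun j _ => ?_)
  · simp only [Finset.mem_Icc, Equiv.neg_apply]
    omega
  · simp

theorem laurentStarEval_eq_conj_laurentEval (z : ℂ) :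
    laurentStarEval c d z = conj (laurentEval c d (conj z)⁻¹) := by
  rw [laurentStarEval, laurentEval, map_sum]
  refine Finset.sum_congr rfl fun j _ => ?_
  simp [map_zpow₀, zpow_neg]

theorem laurentEval_eq_conj_laurentStarEval (z : ℂ) :
    laurentEval c d z = conj (laurentStarEval c d (conj z)⁻¹) := by
  simp [laurentStarEval_eq_conj_laurentEval]

theorem laurentEval_mul_laurentStarEval_conj_inv (z : ℂ) :
    laurentEval c d (conj z)⁻¹ * laurentStarEval c d (conj z)⁻¹ =
      conj (laurentEval c d z * laurentStarEval c d z) := by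
  rw [map_mul, laurentEval_eq_conj_laurentStarEval c d z,
    laurentStarEval_eq_conj_laurentEval c d z, Complex.conj_conj, Complex.conj_conj, mul_comm]

theorem laurentStarEval_of_norm_eq_one {z : ℂ} (hz : ‖z‖ = 1) :
    laurentStarEval c d z = conj (laurentEval c d z) := by
  rw [laurentStarEval_eq_conj_laurentEval,
    Complex.inv_eq_conj (by rwa [Complex.norm_conj]), Complex.conj_conj]

variable {c d} {M : ℝ}

theorem pow_mul_norm_laurentEval_mul_laurentStarEval_le
    (hb : ∀ z : ℂ, ‖z‖ = 1 → ‖laurentEval c d z‖ ≤ M) {z : ℂ} (hz : z ≠ 0) (hz1 : ‖z‖ ≤ 1) :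
    ‖z‖ ^ (2 * d) * ‖laurentEval c d z * laurentStarEval c d z‖ ≤ M ^ 2 := by
  set c' : ℤ → ℂ := fun j => conj (c (-j))
  have hnum : ∀ w ≠ 0, ‖laurentNumerator c d w * laurentNumerator c' d w‖ =
      ‖w‖ ^ (2 * d) * ‖laurentEval c d w * laurentStarEval c d w‖ := fun w hw => by
    rw [laurentNumerator_eq c d hw, laurentNumerator_eq c' d hw, ← laurentStarEval_eq_laurentEval]
    simp only [norm_mul, norm_pow]
    ring
  have hcircle : ∀ w : ℂ, ‖w‖ = 1 →
      ‖laurentNumerator c d w * laurentNumerator c' d w‖ ≤ M ^ 2 := fun w hw => by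
    rw [hnum w (norm_ne_zero_iff.mp (by rw [hw]; exact one_ne_zero)), hw,
      laurentStarEval_of_norm_eq_one c d hw, norm_mul, Complex.norm_conj, one_pow, one_mul, ← sq]
    exact pow_le_pow_left₀ (norm_nonneg _) (hb w hw) 2
  rw [← hnum z hz]
  exact Complex.norm_le_of_forall_norm_eq_one_norm_le
    ((differentiable_laurentNumerator c d).mul (differentiable_laurentNumerator c' d)) hcircle hz1

theorem norm_laurentEval_mul_laurentStarEval_le_of_norm_le_one
    (hb : ∀ z : ℂ, ‖z‖ = 1 → ‖laurentEval c d z‖ ≤ M) (hM : 0 < M) {z : ℂ}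
    (hzM : M ≤ ‖z‖ ^ (2 * d)) (hz : z ≠ 0) (hz1 : ‖z‖ ≤ 1) :
    ‖laurentEval c d z * laurentStarEval c d z‖ ≤ M := by
  have h := pow_mul_norm_laurentEval_mul_laurentStarEval_le hb hz hz1
  refine le_of_mul_le_mul_left ?_ hM
  nlinarith [norm_nonneg (laurentEval c d z * laurentStarEval c d z)]

theorem norm_laurentEval_mul_laurentStarEval_le
    (hb : ∀ z : ℂ, ‖z‖ = 1 → ‖laurentEval c d z‖ ≤ M) {r : ℝ} (hrM : r ^ (2 * d) = M⁻¹) {z : ℂ}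
    (hz₁ : r⁻¹ < ‖z‖) (hz₂ : ‖z‖ < r) :
    ‖laurentEval c d z * laurentStarEval c d z‖ ≤ M := by
  have hr : 0 < r := (norm_nonneg z).trans_lt hz₂
  have hM : 0 < M := inv_pos.mp (hrM ▸ pow_pos hr _)
  have hz : 0 < ‖z‖ := (inv_pos.mpr hr).trans hz₁
  have hMr : M = r⁻¹ ^ (2 * d) := by rw [inv_pow, hrM, inv_inv]
  rcases le_total ‖z‖ 1 with hz1 | hz1
  · exact norm_laurentEval_mul_laurentStarEval_le_of_norm_le_one hb hM
      (hMr ▸ pow_le_pow_left₀ (inv_nonneg.mpr hr.le) hz₁.le _) (norm_pos_iff.mp hz) hz1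
  · have hw : ‖(conj z)⁻¹‖ = ‖z‖⁻¹ := by rw [norm_inv, Complex.norm_conj]
    have h := norm_laurentEval_mul_laurentStarEval_le_of_norm_le_one hb hM
      (z := (conj z)⁻¹) (hMr ▸ hw ▸ pow_le_pow_left₀ (inv_nonneg.mpr hr.le)
        ((inv_le_inv₀ hr hz).mpr hz₂.le) _)
      (by simpa using norm_pos_iff.mp hz) (hw ▸ inv_le_one_of_one_le₀ hz1)
    rwa [laurentEval_mul_laurentStarEval_conj_inv, Complex.norm_conj] at h

end Laurent

theorem one_sub_laurentEval_mul_laurentStarEval_of_norm_eq_one (c : ℤ → ℂ) (d : ℕ) {z : ℂ}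
    (hz : ‖z‖ = 1) :
    1 - laurentEval c d z * laurentStarEval c d z = ((1 - ‖laurentEval c d z‖ ^ 2 : ℝ) : ℂ) := by
  rw [laurentStarEval_of_norm_eq_one c d hz, Complex.mul_conj, Complex.normSq_eq_norm_sq]
  push_cast
  ring

theorem stmt5_general (d : ℕ) (η : ℝ) (hη : 0 < η)
    (c : ℤ → ℂ)
    (hb : ∀ z : ℂ, ‖z‖ = 1 → ‖laurentEval c d z‖ ≤ 1 - η)
    (r : ℝ) (hrd : r ^ (2 * d) = (1 - η)⁻¹) :
    (∀ z : ℂ, r⁻¹ < ‖z‖ → ‖z‖ < r →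
      ‖laurentEval c d z * laurentStarEval c d z‖ ≤ 1 - η ∧
      1 - laurentEval c d z * laurentStarEval c d z ≠ 0 ∧
      ‖Complex.log (1 - laurentEval c d z * laurentStarEval c d z)‖
        ≤ |Real.log η|) ∧
    (∀ z : ℂ, ‖z‖ = 1 →
      (1/2 : ℂ) * Complex.log (1 - laurentEval c d z * laurentStarEval c d z)
        = (Real.log (Real.sqrt (1 - ‖laurentEval c d z‖^2)) : ℂ)) := by
  refine ⟨fun z hz₁ hz₂ => ?_, fun z hz => ?_⟩
  · have hle := norm_laurentEval_mul_laurentStarEval_le hb hrd hz₁ hz₂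
    have hlt : ‖laurentEval c d z * laurentStarEval c d z‖ < 1 := by linarith
    refine ⟨hle, sub_ne_zero.mpr fun h => by simp [← h] at hlt, ?_⟩
    calc ‖Complex.log (1 - laurentEval c d z * laurentStarEval c d z)‖
        ≤ -Real.log (1 - ‖laurentEval c d z * laurentStarEval c d z‖) :=
          Complex.norm_log_one_sub_le hlt
      _ ≤ -Real.log η := neg_le_neg (Real.log_le_log hη (by linarith))
      _ ≤ |Real.log η| := neg_le_abs _
  · have hbz := hb z hz
    rw [one_sub_laurentEval_mul_laurentStarEval_of_norm_eq_one c d hz]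
    exact Complex.half_mul_log_ofReal (by nlinarith [norm_nonneg (laurentEval c d z)])

/-- For all `z` in the annulus `A_r = {r⁻¹ < |z| < r}` one has
`|b(z)b*(z)| ≤ 1−η`, hence `1 − b(z)b*(z) ≠ 0` and `|Log(1 − b(z)b*(z))| ≤ |log η|`;
moreover on the unit circle `(1/2)·Log(1 − b(z)b*(z)) = log √(1−|b(z)|²)`. -/
theorem stmt5 (d : ℕ) (hd : 1 ≤ d) (η : ℝ) (hη : 0 < η) (hη' : η < 1/2)
    (c : ℤ → ℂ)
    (hb : ∀ z : ℂ, ‖z‖ = 1 → ‖laurentEval c d z‖ ≤ 1 - η)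
    (r : ℝ) (hr : 1 < r) (hrd : r ^ (2 * d) = (1 - η)⁻¹) :
    (∀ z : ℂ, r⁻¹ < ‖z‖ → ‖z‖ < r →
      ‖laurentEval c d z * laurentStarEval c d z‖ ≤ 1 - η ∧
      1 - laurentEval c d z * laurentStarEval c d z ≠ 0 ∧
      ‖Complex.log (1 - laurentEval c d z * laurentStarEval c d z)‖
        ≤ |Real.log η|) ∧
    (∀ z : ℂ, ‖z‖ = 1 →
      (1/2 : ℂ) * Complex.log (1 - laurentEval c d z * laurentStarEval c d z)
        = (Real.log (Real.sqrt (1 - ‖laurentEval c d z‖^2)) : ℂ)) :=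
  stmt5_general d η hη c hb r hrd
end

section
/- For every z ∈ A_r one has |b(z)/a(z)| ≤ r^d·η^{−1}. -/
open scoped BigOperators

/-- For a polynomial `p`, the function `p*(z) = conj(p(conj(z)⁻¹))`, so that
`p*(z) = conj(p(z))` on the unit circle. -/
noncomputable def polyStar (p : Polynomial ℂ) (z : ℂ) : ℂ :=
  (starRingEnd ℂ) (Polynomial.eval ((starRingEnd ℂ) z)⁻¹ p)

/-!
On `|z| = 1` we have `p·p* + b·b* = |p|² + |b|² = 1`; multiplying by `z^{2d}` turns both sides
into polynomials, so the identity `p(z)·a(z) = 1 - b(z)·b*(z)` holds for every `z ≠ 0`. By the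
maximum modulus principle applied to `z^d b(z)` and to its reflection, `|b| ≤ (1-η) r^d` on `A_r`;
the annulus is invariant under `z ↦ 1/z̄`, so also `|b*| ≤ (1-η) r^d` there, whence
`|b·b*| ≤ (1-η)² r^{2d} = 1-η` and `|p|·|a| ≥ η`. Together with `|p| ≤ r^{2d} = (1-η)⁻¹` this
gives `|a| ≥ η(1-η)`, and the bound follows.
-/

open Polynomial ComplexConjugate

namespace Polynomial

theorem eval_reflect_inv_mul_pow {K : Type*} [Field K] {f : K[X]} {N : ℕ}
    (hf : f.natDegree ≤ N) {x : K} (hx : x ≠ 0) :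
    (reflect N f).eval x⁻¹ * x ^ N = f.eval x := by
  have := invertibleOfNonzero hx
  have h := eval₂_reflect_mul_pow (RingHom.id K) x N f hf
  rwa [invOf_eq_inv] at h

variable {f : ℂ[X]} {M : ℝ}

theorem norm_eval_le_of_norm_le_one (h : ∀ w : ℂ, ‖w‖ = 1 → ‖f.eval w‖ ≤ M) {z : ℂ}
    (hz : ‖z‖ ≤ 1) : ‖f.eval z‖ ≤ M := by
  refine Complex.norm_le_of_forall_mem_frontier_norm_le (Metric.isBounded_ball (x := 0) (r := 1))
    f.differentiable.diffContOnCl (fun w hw => h w ?_) ?_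
  · rwa [frontier_ball 0 one_ne_zero, mem_sphere_zero_iff_norm] at hw
  · rwa [closure_ball 0 one_ne_zero, mem_closedBall_zero_iff]

theorem norm_eval_le_mul_pow_of_one_le_norm {n : ℕ} (hf : f.natDegree ≤ n)
    (h : ∀ w : ℂ, ‖w‖ = 1 → ‖f.eval w‖ ≤ M) {z : ℂ} (hz : 1 ≤ ‖z‖) :
    ‖f.eval z‖ ≤ M * ‖z‖ ^ n := by
  have hrefl : ∀ w : ℂ, ‖w‖ = 1 → ‖(reflect n f).eval w‖ ≤ M := by
    intro w hw
    have hw₀ : w⁻¹ ≠ 0 := inv_ne_zero (ne_zero_of_norm_ne_zero (hw ▸ one_ne_zero))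
    have hnorm := congrArg norm (eval_reflect_inv_mul_pow hf hw₀)
    rw [inv_inv, norm_mul, norm_pow, norm_inv, hw, inv_one, one_pow, mul_one] at hnorm
    exact hnorm ▸ h _ (by rw [norm_inv, hw, inv_one])
  have hz₀ : z ≠ 0 := norm_ne_zero_iff.mp (one_pos.trans_le hz).ne'
  rw [← eval_reflect_inv_mul_pow hf hz₀, norm_mul, norm_pow]
  gcongr
  exact norm_eval_le_of_norm_le_one hrefl (by rw [norm_inv]; exact inv_le_one_of_one_le₀ hz)

theorem norm_eval_le_mul_pow_of_norm_le {n : ℕ} (hf : f.natDegree ≤ n)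
    (h : ∀ w : ℂ, ‖w‖ = 1 → ‖f.eval w‖ ≤ M) {R : ℝ} (hR : 1 ≤ R) {z : ℂ} (hz : ‖z‖ ≤ R) :
    ‖f.eval z‖ ≤ M * R ^ n := by
  have hM : 0 ≤ M := (norm_nonneg _).trans (h 1 norm_one)
  rcases le_total ‖z‖ 1 with hz₁ | hz₁
  · exact (norm_eval_le_of_norm_le_one h hz₁).trans (le_mul_of_one_le_right hM (one_le_pow₀ hR))
  · exact (norm_eval_le_mul_pow_of_one_le_norm hf h hz₁).trans (by gcongr)

end Polynomial

theorem polyStar_eq_eval_map (p : ℂ[X]) (z : ℂ) : polyStar p z = (p.map conj).eval z⁻¹ := by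
  rw [polyStar, ← eval_map_apply, map_inv₀, Complex.conj_conj]

theorem polyStar_of_norm_eq_one (p : ℂ[X]) {z : ℂ} (hz : ‖z‖ = 1) :
    polyStar p z = conj (p.eval z) := by
  rw [polyStar, ← Complex.inv_eq_conj hz, inv_inv]

theorem eval_reflect_map_conj {p : ℂ[X]} {n : ℕ} (hp : p.natDegree ≤ n) {z : ℂ} (hz : z ≠ 0) :
    (reflect n (p.map conj)).eval z = z ^ n * polyStar p z := by
  have h := eval_reflect_inv_mul_pow (f := p.map conj) (natDegree_map_le.trans hp) (inv_ne_zero hz)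
  rw [inv_inv, inv_pow] at h
  rw [polyStar_eq_eval_map, ← h]
  field_simp

theorem eval_mul_polyStar_add_eval_mul_polyStar {p q : ℂ[X]}
    (h : ∀ w : ℂ, ‖w‖ = 1 → ‖p.eval w‖ ^ 2 + ‖q.eval w‖ ^ 2 = 1) {z : ℂ} (hz : z ≠ 0) :
    p.eval z * polyStar p z + q.eval z * polyStar q z = 1 := by
  obtain ⟨n, hpn, hqn⟩ : ∃ n, p.natDegree ≤ n ∧ q.natDegree ≤ n :=
    ⟨_, le_max_left _ _, le_max_right _ _⟩
  set H := p * reflect n (p.map conj) + q * reflect n (q.map conj) - X ^ n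
  have hH : ∀ w : ℂ, w ≠ 0 →
      H.eval w = w ^ n * (p.eval w * polyStar p w + q.eval w * polyStar q w - 1) := by
    intro w hw
    simp only [H, eval_sub, eval_add, eval_mul, eval_pow, eval_X,
      eval_reflect_map_conj hpn hw, eval_reflect_map_conj hqn hw]
    ring
  have hcircle : Metric.sphere (0 : ℂ) 1 ⊆ {w | H.IsRoot w} := by
    intro w hw
    rw [mem_sphere_zero_iff_norm] at hw
    have hsum : ((‖p.eval w‖ ^ 2 + ‖q.eval w‖ ^ 2 : ℝ) : ℂ) = 1 := by exact_mod_cast h w hw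
    rw [Set.mem_ofPred_eq, IsRoot.def, hH w (ne_zero_of_norm_ne_zero (hw ▸ one_ne_zero)),
      polyStar_of_norm_eq_one p hw, polyStar_of_norm_eq_one q hw, Complex.mul_conj,
      Complex.mul_conj, Complex.normSq_eq_norm_sq, Complex.normSq_eq_norm_sq]
    push_cast at hsum ⊢
    rw [hsum, sub_self, mul_zero]
  have hH₀ : H = 0 := eq_zero_of_infinite_isRoot H <| Set.Infinite.mono hcircle <|
    (isPreconnected_sphere (by simp) 0 1).infinite_of_nontrivial
      ⟨1, by simp, -1, by simp, by norm_num⟩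
  have hz' := hH z hz
  rw [hH₀, eval_zero, eq_comm, mul_eq_zero, sub_eq_zero] at hz'
  exact hz'.resolve_left (pow_ne_zero _ hz)

noncomputable def laurentPoly (c : ℤ → ℂ) (d : ℕ) : ℂ[X] :=
  ∑ j ∈ Finset.Icc (-(d : ℤ)) d, C (c j) * X ^ (j + d).toNat

section laurentPoly

variable (c : ℤ → ℂ) (d : ℕ)

theorem natDegree_laurentPoly_le : (laurentPoly c d).natDegree ≤ 2 * d := by
  refine natDegree_sum_le_of_forall_le _ _ fun j hj => (natDegree_C_mul_X_pow_le _ _).trans ?_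
  rw [Finset.mem_Icc] at hj
  omega

theorem eval_laurentPoly {z : ℂ} (hz : z ≠ 0) :
    (laurentPoly c d).eval z = z ^ d * laurentEval c d z := by
  simp only [laurentPoly, laurentEval, eval_finsetSum, eval_mul, eval_C, eval_pow, eval_X,
    Finset.mul_sum]
  refine Finset.sum_congr rfl fun j hj => ?_
  rw [Finset.mem_Icc] at hj
  rw [← zpow_natCast, Int.toNat_of_nonneg (by omega), zpow_add₀ hz, zpow_natCast]
  ring

theorem eval_laurentPoly_mul_polyStar {z : ℂ} (hz : z ≠ 0) :
    (laurentPoly c d).eval z * polyStar (laurentPoly c d) z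
      = laurentEval c d z * conj (laurentEval c d (conj z)⁻¹) := by
  have hw : (conj z)⁻¹ ≠ 0 := by simpa using hz
  rw [polyStar, eval_laurentPoly c d hw, map_mul, map_pow, map_inv₀, Complex.conj_conj,
    eval_laurentPoly c d hz, mul_mul_mul_comm, ← mul_pow, mul_inv_cancel₀ hz, one_pow, one_mul]

variable {c d}

theorem norm_laurentEval_le_of_mem_annulus {M : ℝ}
    (hb : ∀ w : ℂ, ‖w‖ = 1 → ‖laurentEval c d w‖ ≤ M) {r : ℝ} {z : ℂ}
    (hz₁ : r⁻¹ < ‖z‖) (hz₂ : ‖z‖ < r) : ‖laurentEval c d z‖ ≤ M * r ^ d := by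
  have hr : 0 < r := (norm_nonneg z).trans_lt hz₂
  have hz : z ≠ 0 := norm_pos_iff.mp ((inv_pos.mpr hr).trans hz₁)
  have hM : 0 ≤ M := (norm_nonneg _).trans (hb 1 norm_one)
  have hF : ∀ w : ℂ, ‖w‖ = 1 → ‖(laurentPoly c d).eval w‖ ≤ M := fun w hw => by
    rw [eval_laurentPoly c d (ne_zero_of_norm_ne_zero (hw ▸ one_ne_zero)), norm_mul, norm_pow, hw,
      one_pow, one_mul]
    exact hb w hw
  have hFz : ‖(laurentPoly c d).eval z‖ = ‖z‖ ^ d * ‖laurentEval c d z‖ := by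
    rw [eval_laurentPoly c d hz, norm_mul, norm_pow]
  rcases le_total ‖z‖ 1 with h₁ | h₁
  · have hbound := hFz ▸ norm_eval_le_of_norm_le_one hF h₁
    have hzr : 1 ≤ ‖z‖ ^ d * r ^ d := by
      rw [← mul_pow]
      exact one_le_pow₀ ((inv_lt_iff_one_lt_mul₀ hr).mp hz₁).le
    calc ‖laurentEval c d z‖ ≤ ‖laurentEval c d z‖ * (‖z‖ ^ d * r ^ d) :=
          le_mul_of_one_le_right (norm_nonneg _) hzr
      _ = ‖z‖ ^ d * ‖laurentEval c d z‖ * r ^ d := by ring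
      _ ≤ M * r ^ d := by gcongr
  · have hbound := hFz ▸ norm_eval_le_mul_pow_of_one_le_norm (natDegree_laurentPoly_le c d) hF h₁
    have hzr : ‖z‖ ^ d ≤ r ^ d := by gcongr
    rw [two_mul, pow_add, mul_left_comm] at hbound
    calc ‖laurentEval c d z‖ ≤ M * ‖z‖ ^ d :=
          le_of_mul_le_mul_left hbound (pow_pos (one_pos.trans_le h₁) d)
      _ ≤ M * r ^ d := by gcongr

end laurentPoly

theorem stmt8_general (d : ℕ) (η : ℝ) (hη : 0 < η)
    (c : ℤ → ℂ)
    (hb : ∀ z : ℂ, ‖z‖ = 1 → ‖laurentEval c d z‖ ≤ 1 - η)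
    (r : ℝ) (hr : 1 < r) (hrd : r ^ (2 * d) = (1 - η)⁻¹)
    (p : Polynomial ℂ) (hpdeg : p.natDegree ≤ 2 * d)
    (hpm : ∀ z : ℂ, ‖z‖ = 1 →
      (‖Polynomial.eval z p‖)^2 = 1 - (‖laurentEval c d z‖)^2) :
    ∀ z : ℂ, r⁻¹ < ‖z‖ → ‖z‖ < r →
      ‖laurentEval c d z / polyStar p z‖ ≤ r ^ d * η⁻¹ := by
  intro z hz₁ hz₂
  have hr₀ : 0 < r := one_pos.trans hr
  have hη₁ : 0 < 1 - η := inv_pos.mp (hrd ▸ pow_pos hr₀ _)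
  have hz : z ≠ 0 := norm_pos_iff.mp ((inv_pos.mpr hr₀).trans hz₁)
  have hw₁ : r⁻¹ < ‖(conj z)⁻¹‖ := by
    rw [norm_inv, Complex.norm_conj]; exact inv_strictAnti₀ (norm_pos_iff.mpr hz) hz₂
  have hw₂ : ‖(conj z)⁻¹‖ < r := by
    rw [norm_inv, Complex.norm_conj]; exact inv_lt_of_inv_lt₀ hr₀ hz₁
  have hbz := norm_laurentEval_le_of_mem_annulus hb hz₁ hz₂
  have hbw := norm_laurentEval_le_of_mem_annulus hb hw₁ hw₂
  have hp₁ : ∀ w : ℂ, ‖w‖ = 1 → ‖p.eval w‖ ≤ 1 := fun w hw =>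
    (sq_le_one_iff₀ (norm_nonneg _)).mp (by linarith [hpm w hw, sq_nonneg ‖laurentEval c d w‖])
  have hpz : ‖p.eval z‖ ≤ (1 - η)⁻¹ := by
    simpa [hrd] using norm_eval_le_mul_pow_of_norm_le hpdeg hp₁ hr.le hz₂.le
  have hid : p.eval z * polyStar p z
      = 1 - laurentEval c d z * conj (laurentEval c d (conj z)⁻¹) := by
    rw [← eval_laurentPoly_mul_polyStar c d hz]
    refine eq_sub_of_add_eq (eval_mul_polyStar_add_eval_mul_polyStar (fun w hw => ?_) hz)
    rw [hpm w hw, eval_laurentPoly c d (ne_zero_of_norm_ne_zero (hw ▸ one_ne_zero)), norm_mul,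
      norm_pow, hw, one_pow, one_mul, sub_add_cancel]
  have hpa : η ≤ ‖p.eval z‖ * ‖polyStar p z‖ := by
    rw [← norm_mul, hid]
    calc η = 1 - (1 - η) * r ^ d * ((1 - η) * r ^ d) := by
            rw [mul_mul_mul_comm, ← pow_add, ← two_mul, hrd]; field_simp; ring
      _ ≤ 1 - ‖laurentEval c d z‖ * ‖conj (laurentEval c d (conj z)⁻¹)‖ := by
            rw [Complex.norm_conj]; gcongr
      _ ≤ ‖1 - laurentEval c d z * conj (laurentEval c d (conj z)⁻¹)‖ := by
            rw [← norm_mul, ← norm_one (α := ℂ)]; exact norm_sub_norm_le _ _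
  have ha : η * (1 - η) ≤ ‖polyStar p z‖ :=
    calc η * (1 - η) ≤ ‖p.eval z‖ * ‖polyStar p z‖ * (1 - η) := by gcongr
      _ ≤ (1 - η)⁻¹ * ‖polyStar p z‖ * (1 - η) := by gcongr
      _ = ‖polyStar p z‖ := by field_simp
  calc ‖laurentEval c d z / polyStar p z‖ = ‖laurentEval c d z‖ / ‖polyStar p z‖ := norm_div _ _
    _ ≤ (1 - η) * r ^ d / (η * (1 - η)) := by gcongr
    _ = r ^ d * η⁻¹ := by field_simp

/-- With `a = p*`, for every `z` in the annulus `A_r` one has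
`|b(z)/a(z)| ≤ r^d η⁻¹`. -/
theorem stmt8 (d : ℕ) (hd : 1 ≤ d) (η : ℝ) (hη : 0 < η) (hη' : η < 1/2)
    (c : ℤ → ℂ)
    (hb : ∀ z : ℂ, ‖z‖ = 1 → ‖laurentEval c d z‖ ≤ 1 - η)
    (r : ℝ) (hr : 1 < r) (hrd : r ^ (2 * d) = (1 - η)⁻¹)
    (p : Polynomial ℂ) (hpdeg : p.natDegree ≤ 2 * d)
    (hpz : ∀ z : ℂ, ‖z‖ ≤ 1 → Polynomial.eval z p ≠ 0)
    (hpm : ∀ z : ℂ, ‖z‖ = 1 →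
      (‖Polynomial.eval z p‖)^2 = 1 - (‖laurentEval c d z‖)^2) :
    ∀ z : ℂ, r⁻¹ < ‖z‖ → ‖z‖ < r →
      ‖laurentEval c d z / polyStar p z‖ ≤ r ^ d * η⁻¹ :=
  stmt8_general d η hη c hb r hr hrd p hpdeg hpm
end

section
/- Let m ≥ 1 and let Ξ ∈ M_m(ℂ) be skew-Hermitian (Ξ† = −Ξ). Let T be the 2m×2m block matrix [[I_m, −Ξ],[−Ξ, I_m]]. Then T is invertible, ‖T^{−1}‖ ≤ 1, ‖T‖ ≤ √(1+‖Ξ‖²), and every singular value of T is of the form √(1+λ²), where i·λ (λ ∈ ℝ) ranges over the eigenvalues of Ξ. -/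
/-!
Write `T = 1 - K` with `K = [[0, Ξ], [Ξ, 0]]`, which is skew-adjoint because `Ξ` is. For a
skew-adjoint `k` in a C⋆-algebra, `(1 - k)⋆(1 - k) = 1 + k⋆k ≥ 1`. Hence `‖1 - k‖² ≤ 1 + ‖k‖²`,
and `‖x‖ ≤ ‖(1 - k) x‖` for every `x`, so that `‖(1 - k)⁻¹‖ ≤ 1`. The spectrum of `k` is purely
imaginary, so `1 - k` is invertible and `1 - k²` has spectrum `{1 + λ² | iλ ∈ σ(k)}`. For
`T` itself, `‖K‖ = ‖Ξ‖` and `TᴴT = diag(1 - Ξ², 1 - Ξ²)` has the same spectrum as `1 - Ξ²`.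
-/

open Matrix

/-- The operator norm of a complex square matrix, induced by the Euclidean (`ℓ²`) vector norm. -/
noncomputable def l2OpNorm' {n : Type*} [Fintype n] [DecidableEq n]
    (A : Matrix n n ℂ) : ℝ :=
  ‖Matrix.toEuclideanCLM (𝕜 := ℂ) A‖

/-- The block matrix `T = [[I, −Ξ], [−Ξ, I]]`. -/
def blockT {m : ℕ} (Ξ : Matrix (Fin m) (Fin m) ℂ) :
    Matrix (Fin m ⊕ Fin m) (Fin m ⊕ Fin m) ℂ :=
  Matrix.fromBlocks 1 (-Ξ) (-Ξ) 1

open Complex Polynomial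
open scoped Matrix.Norms.L2Operator MatrixOrder

theorem spectrum.one_sub_sq_eq {𝕜 A : Type*} [Field 𝕜] [IsAlgClosed 𝕜] [Ring A] [Algebra 𝕜 A]
    (a : A) : spectrum 𝕜 (1 - a ^ 2) = (fun μ => 1 - μ ^ 2) '' spectrum 𝕜 a := by
  have hdeg : 0 < (1 - X ^ 2 : 𝕜[X]).degree := by
    rw [degree_sub_eq_right_of_degree_lt] <;> simp
  simpa using spectrum.map_polynomial_aeval_of_degree_pos a _ hdeg

theorem IsSelfAdjoint.norm_eq_of_spectrum_eq {A B : Type*} [CStarAlgebra A] [CStarAlgebra B]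
    {a : A} {b : B} (ha : IsSelfAdjoint a) (hb : IsSelfAdjoint b)
    (h : spectrum ℂ a = spectrum ℂ b) : ‖a‖ = ‖b‖ := by
  rw [← ha.toReal_spectralRadius_complex_eq_norm, ← hb.toReal_spectralRadius_complex_eq_norm,
    spectralRadius, spectralRadius, h]

namespace skewAdjoint

variable {A : Type*} [CStarAlgebra A] {k : A}

theorem mem_spectrum_eq_I_mul_im (hk : k ∈ skewAdjoint A) {μ : ℂ} (hμ : μ ∈ spectrum ℂ k) :
    μ = I * μ.im := by
  have hIk : IsSelfAdjoint (I • k) :=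
    isSelfAdjoint_smul_of_mem_skewAdjoint (mem_iff.mpr (by simp)) hk
  have hIμ : I * μ ∈ spectrum ℂ (I • k) := by
    rw [← Units.val_mk0 I_ne_zero, ← Units.smul_def, spectrum.unit_smul_eq_smul]
    exact Set.smul_mem_smul_set hμ
  have hre := hIk.mem_spectrum_eq_re hIμ
  simp only [mul_re, I_re, zero_mul, I_im, one_mul, zero_sub, ofReal_neg] at hre
  linear_combination (-I) * hre + μ * I_sq

theorem isUnit_one_sub (hk : k ∈ skewAdjoint A) : IsUnit (1 - k) := by
  have h1 : (1 : ℂ) ∉ spectrum ℂ k := fun h => by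
    simpa using congrArg re (mem_spectrum_eq_I_mul_im hk h)
  simpa [spectrum.notMem_iff] using h1

theorem ofReal_sq_mem_spectrum_one_sub_sq_iff (hk : k ∈ skewAdjoint A) {s : ℝ} (hs : 0 ≤ s) :
    ((s ^ 2 : ℝ) : ℂ) ∈ spectrum ℂ (1 - k ^ 2) ↔
      ∃ lam : ℝ, I * lam ∈ spectrum ℂ k ∧ s = √(1 + lam ^ 2) := by
  have hI (lam : ℝ) : 1 - (I * lam) ^ 2 = ((1 + lam ^ 2 : ℝ) : ℂ) := by
    push_cast; rw [mul_pow, I_sq]; ring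
  rw [spectrum.one_sub_sq_eq]
  constructor
  · rintro ⟨μ, hμ, hs2 : 1 - μ ^ 2 = _⟩
    have hμI := mem_spectrum_eq_I_mul_im hk hμ
    rw [hμI, hI, ofReal_inj] at hs2
    exact ⟨μ.im, hμI ▸ hμ, by rw [hs2, Real.sqrt_sq hs]⟩
  · rintro ⟨lam, hlam, rfl⟩
    exact ⟨_, hlam, show 1 - _ ^ 2 = _ by rw [hI, Real.sq_sqrt (by positivity)]⟩

theorem star_one_sub_mul_one_sub (hk : k ∈ skewAdjoint A) :
    star (1 - k) * (1 - k) = 1 + star k * k := by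
  rw [star_sub, star_one, mem_iff.mp hk]
  noncomm_ring

theorem norm_one_sub_le (hk : k ∈ skewAdjoint A) : ‖1 - k‖ ≤ √(1 + ‖k‖ ^ 2) := by
  nontriviality A
  rw [Real.le_sqrt (norm_nonneg _) (by positivity), sq, ← CStarRing.norm_star_mul_self,
    star_one_sub_mul_one_sub hk, sq, ← CStarRing.norm_star_mul_self]
  exact (norm_add_le _ _).trans_eq (by rw [CStarRing.norm_one])

variable [PartialOrder A] [StarOrderedRing A]

theorem norm_le_norm_one_sub_mul (hk : k ∈ skewAdjoint A) (x : A) : ‖x‖ ≤ ‖(1 - k) * x‖ := by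
  have hle : star x * x ≤ star ((1 - k) * x) * ((1 - k) * x) := by
    rw [star_mul, mul_assoc, ← mul_assoc (star (1 - k)), star_one_sub_mul_one_sub hk,
      ← mul_assoc]
    simpa using star_left_conjugate_le_conjugate
      (le_add_of_nonneg_right (star_mul_self_nonneg k) : (1 : A) ≤ 1 + star k * k) x
  have hnorm := CStarAlgebra.norm_le_norm_of_nonneg_of_le (star_mul_self_nonneg x) hle
  rw [CStarRing.norm_star_mul_self, CStarRing.norm_star_mul_self] at hnorm
  exact mul_self_le_mul_self_iff (norm_nonneg _) (norm_nonneg _) |>.mpr hnorm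

theorem norm_inverse_one_sub_le_one (hk : k ∈ skewAdjoint A) : ‖Ring.inverse (1 - k)‖ ≤ 1 := by
  nontriviality A
  calc ‖Ring.inverse (1 - k)‖ ≤ ‖(1 - k) * Ring.inverse (1 - k)‖ :=
        norm_le_norm_one_sub_mul hk _
    _ = 1 := by rw [Ring.mul_inverse_cancel _ (isUnit_one_sub hk), CStarRing.norm_one]

end skewAdjoint

namespace Matrix

theorem fromBlocks_zero_self_self_zero_mem_skewAdjoint {n α : Type*} [AddCommGroup α]
    [StarAddMonoid α] {A : Matrix n n α} (hA : A ∈ skewAdjoint (Matrix n n α)) :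
    fromBlocks 0 A A 0 ∈ skewAdjoint _ := by
  rw [skewAdjoint.mem_iff, star_eq_conjTranspose] at hA ⊢
  simp [fromBlocks_conjTranspose, fromBlocks_neg, hA]

variable {n : Type*} [Fintype n] [DecidableEq n]

theorem spectrum_fromBlocks_zero_zero_self {R : Type*} [CommRing R] (A : Matrix n n R) :
    spectrum R (fromBlocks A 0 0 A) = spectrum R A := by
  ext r
  have h : algebraMap R _ r - fromBlocks A 0 0 A =
      fromBlocks (algebraMap R _ r - A) 0 0 (algebraMap R _ r - A) := by
    rw [Algebra.algebraMap_eq_smul_one, Algebra.algebraMap_eq_smul_one, ← fromBlocks_one,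
      fromBlocks_smul]
    ext (i | i) (j | j) <;> simp
  simp only [spectrum.mem_iff, h, isUnit_iff_isUnit_det (fromBlocks _ _ _ _),
    det_fromBlocks_zero₂₁, IsUnit.mul_iff, and_self, ← isUnit_iff_isUnit_det]

theorem l2_opNorm_fromBlocks_zero_self_self_zero (A : Matrix n n ℂ) :
    ‖fromBlocks 0 A A 0‖ = ‖A‖ := by
  have hmul : (fromBlocks 0 A A 0)ᴴ * fromBlocks 0 A A 0 = fromBlocks (Aᴴ * A) 0 0 (Aᴴ * A) := by
    simp [fromBlocks_conjTranspose, fromBlocks_multiply]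
  have hsq : ‖(fromBlocks 0 A A 0)ᴴ * fromBlocks 0 A A 0‖ = ‖Aᴴ * A‖ := by
    refine IsSelfAdjoint.norm_eq_of_spectrum_eq (.star_mul_self _) (.star_mul_self A) ?_
    rw [hmul, spectrum_fromBlocks_zero_zero_self]
  rw [l2_opNorm_conjTranspose_mul_self, l2_opNorm_conjTranspose_mul_self] at hsq
  exact mul_self_inj (norm_nonneg _) (norm_nonneg _) |>.mp hsq

end Matrix

theorem blockT_eq_one_sub {m : ℕ} (Ξ : Matrix (Fin m) (Fin m) ℂ) :
    blockT Ξ = 1 - fromBlocks 0 Ξ Ξ 0 := by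
  ext (i | i) (j | j) <;> simp [blockT, one_apply]

theorem conjTranspose_blockT_mul_blockT {m : ℕ} {Ξ : Matrix (Fin m) (Fin m) ℂ}
    (hskew : Ξᴴ = -Ξ) :
    (blockT Ξ)ᴴ * blockT Ξ = fromBlocks (1 - Ξ ^ 2) 0 0 (1 - Ξ ^ 2) := by
  simp only [blockT, fromBlocks_conjTranspose, fromBlocks_multiply, hskew, conjTranspose_one,
    conjTranspose_neg, neg_neg, sq]
  congr 1 <;> noncomm_ring

theorem stmt12_general (m : ℕ) (Ξ : Matrix (Fin m) (Fin m) ℂ)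
    (hskew : Ξᴴ = -Ξ) :
    IsUnit (blockT Ξ) ∧
    l2OpNorm' (blockT Ξ)⁻¹ ≤ 1 ∧
    l2OpNorm' (blockT Ξ) ≤ Real.sqrt (1 + (l2OpNorm' Ξ)^2) ∧
    (∀ s : ℝ, 0 ≤ s →
      (((s^2 : ℝ) : ℂ) ∈ spectrum ℂ ((blockT Ξ)ᴴ * blockT Ξ) ↔
        ∃ lam : ℝ, (Complex.I * lam) ∈ spectrum ℂ Ξ ∧ s = Real.sqrt (1 + lam^2))) := by
  have hΞ : Ξ ∈ skewAdjoint _ := skewAdjoint.mem_iff.mpr hskew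
  have hK := fromBlocks_zero_self_self_zero_mem_skewAdjoint hΞ
  refine ⟨blockT_eq_one_sub Ξ ▸ skewAdjoint.isUnit_one_sub hK, ?_, ?_, fun s hs => ?_⟩
  · rw [l2OpNorm', ← cstar_norm_def, nonsing_inv_eq_ringInverse, blockT_eq_one_sub]
    exact skewAdjoint.norm_inverse_one_sub_le_one hK
  · rw [l2OpNorm', l2OpNorm', ← cstar_norm_def, ← cstar_norm_def, blockT_eq_one_sub,
      ← l2_opNorm_fromBlocks_zero_self_self_zero Ξ]
    exact skewAdjoint.norm_one_sub_le hK
  · rw [conjTranspose_blockT_mul_blockT hskew, spectrum_fromBlocks_zero_zero_self]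
    exact skewAdjoint.ofReal_sq_mem_spectrum_one_sub_sq_iff hΞ hs

/-- If `Ξ` is skew-Hermitian then `T = [[I,−Ξ],[−Ξ,I]]` is invertible,
`‖T⁻¹‖ ≤ 1`, `‖T‖ ≤ √(1+‖Ξ‖²)`, and the singular values of `T` (i.e. the nonnegative `s` with
`s²` in the spectrum of `Tᴴ T`) are exactly the numbers `√(1+λ²)` where `iλ` (`λ` real) ranges
over the eigenvalues of `Ξ`. -/
theorem stmt12 (m : ℕ) (hm : 1 ≤ m) (Ξ : Matrix (Fin m) (Fin m) ℂ)
    (hskew : Ξᴴ = -Ξ) :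
    IsUnit (blockT Ξ) ∧
    l2OpNorm' (blockT Ξ)⁻¹ ≤ 1 ∧
    l2OpNorm' (blockT Ξ) ≤ Real.sqrt (1 + (l2OpNorm' Ξ)^2) ∧
    (∀ s : ℝ, 0 ≤ s →
      (((s^2 : ℝ) : ℂ) ∈ spectrum ℂ ((blockT Ξ)ᴴ * blockT Ξ) ↔
        ∃ lam : ℝ, (Complex.I * lam) ∈ spectrum ℂ Ξ ∧ s = Real.sqrt (1 + lam^2))) :=
  stmt12_general m Ξ hskew
end

section
/- Let u ∈ L^∞(T) with Fourier coefficients c_j := ∫_T u(z)·z^{−j}, and suppose c_j = 0 for all j > d. Fix an integer 0 ≤ k ≤ d, set n := d − k, and let Ξ_k ∈ M_{n+1}(ℂ) be the Hankel matrix with entries (Ξ_k)_{ij} = c_{i+j+k} for 0 ≤ i, j ≤ n. Then ‖Ξ_k‖ ≤ esssup_{z∈T} |u(z)|. -/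
open MeasureTheory AddCircle

instance : Fact (0 < 2 * Real.pi) := ⟨Real.two_pi_pos⟩

/-!
The Hankel matrix is a compression of the multiplication operator `M_u` on `L²(T)`: its entries
are `⟪z^i, M_u z^{-(j+k)}⟫ = c_{i+j+k}`. By Bessel's inequality, compressing an operator between
two finite orthonormal families does not increase its norm, and `‖M_u‖ ≤ ‖u‖_∞`.
-/

section Compression

variable {𝕜 E F ι : Type*} [RCLike 𝕜] [NormedAddCommGroup E] [InnerProductSpace 𝕜 E]
  [NormedAddCommGroup F] [InnerProductSpace 𝕜 F] [Fintype ι]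

theorem Orthonormal.norm_sum_smul {v : ι → E} (hv : Orthonormal 𝕜 v)
    (x : EuclideanSpace 𝕜 ι) : ‖∑ i, x i • v i‖ = ‖x‖ := by
  rw [← sq_eq_sq₀ (norm_nonneg _) (norm_nonneg _), EuclideanSpace.norm_sq_eq,
    ← RCLike.ofReal_inj (K := 𝕜)]
  push_cast
  rw [← inner_self_eq_norm_sq_to_K, hv.inner_sum]
  simp [RCLike.conj_mul]

theorem Orthonormal.norm_toEuclideanCLM_of_inner_le [DecidableEq ι] {v : ι → F} {w : ι → E}
    (hv : Orthonormal 𝕜 v) (hw : Orthonormal 𝕜 w) (T : E →L[𝕜] F) :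
    ‖Matrix.toEuclideanCLM (𝕜 := 𝕜) (Matrix.of fun i j => inner 𝕜 (v i) (T (w j)))‖ ≤ ‖T‖ := by
  set A := Matrix.toEuclideanCLM (𝕜 := 𝕜) (Matrix.of fun i j => inner 𝕜 (v i) (T (w j)))
  refine A.opNorm_le_bound (norm_nonneg T) fun x => ?_
  set y := T (∑ j, x j • w j)
  have hcoord : ∀ i, A x i = inner 𝕜 (v i) y := fun i => by
    simp [A, y, Matrix.mulVec, dotProduct, inner_sum, inner_smul_right, mul_comm]
  have hbessel : ‖A x‖ ≤ ‖y‖ := by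
    rw [← sq_le_sq₀ (norm_nonneg _) (norm_nonneg _), EuclideanSpace.norm_sq_eq]
    simp_rw [hcoord]
    exact hv.sum_inner_products_le y
  calc ‖A x‖ ≤ ‖y‖ := hbessel
    _ ≤ ‖T‖ * ‖∑ j, x j • w j‖ := T.le_opNorm _
    _ = ‖T‖ * ‖x‖ := by rw [hw.norm_sum_smul]

end Compression

section Multiplication

variable {α : Type*} [MeasurableSpace α] {μ : Measure α}

noncomputable def multiplicationOperator (U : Lp ℂ ⊤ μ) : Lp ℂ 2 μ →L[ℂ] Lp ℂ 2 μ :=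
  (ContinuousLinearMap.mul ℂ ℂ).holderL μ ⊤ 2 2 U

theorem coeFn_multiplicationOperator (U : Lp ℂ ⊤ μ) (g : Lp ℂ 2 μ) :
    multiplicationOperator U g =ᵐ[μ] fun x => U x * g x :=
  (ContinuousLinearMap.mul ℂ ℂ).coeFn_holder U g

theorem norm_multiplicationOperator_le (U : Lp ℂ ⊤ μ) : ‖multiplicationOperator U‖ ≤ ‖U‖ :=
  calc ‖multiplicationOperator U‖
      ≤ ‖(ContinuousLinearMap.mul ℂ ℂ).holderL μ ⊤ 2 2‖ * ‖U‖ := ContinuousLinearMap.le_opNorm _ _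
    _ ≤ 1 * ‖U‖ := by
      gcongr
      exact (ContinuousLinearMap.norm_holderL_le _).trans (ContinuousLinearMap.opNorm_mul_le ℂ ℂ)
    _ = ‖U‖ := one_mul _

end Multiplication

section Fourier

variable {T : ℝ} [Fact (0 < T)]

theorem inner_fourierLp_multiplicationOperator (U : Lp ℂ ⊤ (haarAddCircle (T := T)))
    (m n : ℤ) :
    inner ℂ (fourierLp 2 n) (multiplicationOperator U (fourierLp 2 m)) = fourierCoeff U (n - m) := by
  rw [← coe_fourierBasis, ← fourierBasis.repr_apply_apply, fourierBasis_repr, coe_fourierBasis,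
    fourierCoeff, fourierCoeff]
  refine integral_congr_ae ?_
  filter_upwards [coeFn_multiplicationOperator U (fourierLp 2 m), coeFn_fourierLp 2 m]
    with z hUm hm
  rw [hUm, hm, smul_eq_mul, smul_eq_mul, show -(n - m) = -n + m by ring, fourier_add]
  ring

theorem norm_toEuclideanCLM_fourierCoeff_sub_le {ι : Type*} [Fintype ι] [DecidableEq ι]
    {u : AddCircle T → ℂ} (hu : MemLp u ⊤ haarAddCircle) {a b : ι → ℤ}
    (ha : Function.Injective a) (hb : Function.Injective b) :
    ‖Matrix.toEuclideanCLM (𝕜 := ℂ) (Matrix.of fun i j => fourierCoeff u (a i - b j))‖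
      ≤ (eLpNorm u ⊤ haarAddCircle).toReal := by
  have hcoeff : fourierCoeff (hu.toLp u) = fourierCoeff u :=
    funext fun n => integral_congr_ae <| hu.coeFn_toLp.mono fun z hz => by simp only [hz]
  have hmatrix : (Matrix.of fun i j => fourierCoeff u (a i - b j)) = Matrix.of fun i j =>
      inner ℂ (fourierLp 2 (a i)) (multiplicationOperator (hu.toLp u) (fourierLp 2 (b j))) := by
    ext i j
    simp only [Matrix.of_apply, inner_fourierLp_multiplicationOperator, hcoeff]
  calc _ ≤ ‖multiplicationOperator (hu.toLp u)‖ := by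
        rw [hmatrix]
        exact (orthonormal_fourier.comp a ha).norm_toEuclideanCLM_of_inner_le
          (orthonormal_fourier.comp b hb) _
    _ ≤ ‖hu.toLp u‖ := norm_multiplicationOperator_le _
    _ = (eLpNorm u ⊤ haarAddCircle).toReal := Lp.norm_toLp u hu

end Fourier

theorem stmt13_general (u : AddCircle (2 * Real.pi) → ℂ)
    (hu : MemLp u ⊤ haarAddCircle)
    (d : ℕ)
    (k : ℕ) :
    l2OpNorm' (Matrix.of fun i j : Fin (d - k + 1) =>
        fourierCoeff u ((i : ℤ) + (j : ℤ) + (k : ℤ)))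
      ≤ (eLpNorm u ⊤ haarAddCircle).toReal := by
  have hankel := norm_toEuclideanCLM_fourierCoeff_sub_le hu
    (a := fun i : Fin (d - k + 1) => (i : ℤ)) (b := fun j => -((j : ℤ) + k))
    (fun i i' h => Fin.ext (by simpa using h)) (fun j j' h => Fin.ext (by simpa using h))
  simpa only [l2OpNorm', sub_neg_eq_add, add_assoc] using hankel

/-- Let `u ∈ L^∞(T)` with Fourier coefficients `c_j` vanishing for `j > d`.
For `0 ≤ k ≤ d` and `n = d − k`, the `(n+1)×(n+1)` Hankel matrix `Ξ_k` with entries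
`(Ξ_k)_{ij} = c_{i+j+k}` satisfies `‖Ξ_k‖ ≤ esssup |u|`. -/
theorem stmt13 (u : AddCircle (2 * Real.pi) → ℂ)
    (hu : MemLp u ⊤ haarAddCircle)
    (d : ℕ) (hvan : ∀ j : ℤ, (d : ℤ) < j → fourierCoeff u j = 0)
    (k : ℕ) (hk : k ≤ d) :
    l2OpNorm' (Matrix.of fun i j : Fin (d - k + 1) =>
        fourierCoeff u ((i : ℤ) + (j : ℤ) + (k : ℤ)))
      ≤ (eLpNorm u ⊤ haarAddCircle).toReal :=
  stmt13_general u hu d k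
end

section
/- Let m ≥ 1 and let Ξ ∈ M_m(ℂ) be skew-Hermitian (Ξ† = −Ξ). Then I − Ξ² is Hermitian positive definite, the quantity a₀ := e₀ᵀ(I−Ξ²)^{−1}e₀ is a real number satisfying a₀ ≥ 1/(1+‖Ξ‖²), and |e₀ᵀ(I−Ξ²)^{−1}Ξ e₀| ≤ 1. In particular, if 0 < η < 1 and ‖Ξ‖ ≤ (1−η)/√(1−(1−η)²), then a₀ ≥ 2η − η² ≥ η. -/
open Matrix
open scoped ComplexOrder

/-!
Write `B = 1 - Ξ² = 1 + Ξᴴ Ξ`, which is positive definite, and `P = B⁻¹`. Everything comes from the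
Cauchy–Schwarz inequality `|(P X)ᵢⱼ|² ≤ Pᵢᵢ (Xᴴ P X)ⱼⱼ` for positive semidefinite `P`.
With `X = B` it reads `1 ≤ (B⁻¹)₀₀ B₀₀`, and `B₀₀ = 1 + ‖Ξ e₀‖² ≤ 1 + ‖Ξ‖²`.
With `X = Ξ`, since `Ξ` commutes with `B` we get `Ξᴴ P Ξ = -Ξ P Ξ = 1 - P`, so
`|(P Ξ)₀₀|² ≤ a₀ (1 - a₀) ≤ 1/4`.
-/

namespace Matrix

variable {𝕜 n : Type*} [RCLike 𝕜] [Fintype n] [DecidableEq n]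

open scoped MatrixOrder in
theorem PosSemidef.norm_star_dotProduct_mulVec_sq_le {A : Matrix n n 𝕜}
    (hA : A.PosSemidef) (x y : n → 𝕜) :
    ‖star x ⬝ᵥ (A *ᵥ y)‖ ^ 2
      ≤ RCLike.re (star x ⬝ᵥ (A *ᵥ x)) * RCLike.re (star y ⬝ᵥ (A *ᵥ y)) := by
  obtain ⟨S, rfl⟩ := CStarAlgebra.nonneg_iff_eq_star_mul_self.mp hA.nonneg
  have inner_eq (u v : n → 𝕜) : star u ⬝ᵥ ((star S * S) *ᵥ v)
      = inner 𝕜 (WithLp.toLp 2 (S *ᵥ u)) (WithLp.toLp 2 (S *ᵥ v)) := by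
    rw [EuclideanSpace.inner_toLp_toLp, ← mulVec_mulVec, dotProduct_mulVec, star_mulVec,
      star_eq_conjTranspose, dotProduct_comm]
  rw [inner_eq, inner_eq, inner_eq, sq]
  nth_rw 2 [norm_inner_symm]
  exact inner_mul_inner_self_le _ _

theorem star_single_dotProduct_mulVec_single {m : Type*} [Fintype m] [DecidableEq m]
    (A : Matrix n m 𝕜) (i : n) (j : m) :
    star (Pi.single i 1 : n → 𝕜) ⬝ᵥ (A *ᵥ Pi.single j 1) = A i j := by
  simp [Pi.single_apply, dotProduct, apply_ite]

theorem PosSemidef.norm_mul_apply_sq_le {m : Type*} [Fintype m] [DecidableEq m]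
    {P : Matrix n n 𝕜} (hP : P.PosSemidef) (X : Matrix n m 𝕜) (i : n) (j : m) :
    ‖(P * X) i j‖ ^ 2 ≤ RCLike.re (P i i) * RCLike.re ((Xᴴ * P * X) j j) := by
  have h := hP.norm_star_dotProduct_mulVec_sq_le (Pi.single i 1) (X *ᵥ Pi.single j 1)
  rwa [star_mulVec, ← dotProduct_mulVec, mulVec_mulVec, mulVec_mulVec, ← Matrix.mul_assoc,
    star_single_dotProduct_mulVec_single, star_single_dotProduct_mulVec_single,
    star_single_dotProduct_mulVec_single] at h

theorem PosDef.one_le_re_apply_mul_re_inv_apply {A : Matrix n n 𝕜} (hA : A.PosDef) (i : n) :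
    1 ≤ RCLike.re (A i i) * RCLike.re (A⁻¹ i i) := by
  have hdet : IsUnit A.det := (isUnit_iff_isUnit_det A).mp hA.isUnit
  have h := hA.inv.posSemidef.norm_mul_apply_sq_le A i i
  rwa [nonsing_inv_mul A hdet, hA.isHermitian.eq, Matrix.mul_assoc, nonsing_inv_mul A hdet,
    Matrix.mul_one, one_apply_eq, norm_one, one_pow, mul_comm] at h

theorem mul_inv_one_sub_sq_mul {R : Type*} [CommRing R] (X : Matrix n n R)
    (h : IsUnit (1 - X ^ 2).det) : X * (1 - X ^ 2)⁻¹ * X = (1 - X ^ 2)⁻¹ - 1 := by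
  set P := (1 - X ^ 2)⁻¹
  have hcomm : X * P = P * X := by
    calc X * P = P * (1 - X ^ 2) * X * P := by rw [nonsing_inv_mul _ h, one_mul]
      _ = P * X * ((1 - X ^ 2) * P) := by noncomm_ring
      _ = P * X := by rw [mul_nonsing_inv _ h, mul_one]
  calc X * P * X = P - P * (1 - X ^ 2) := by rw [hcomm]; noncomm_ring
    _ = P - 1 := by rw [nonsing_inv_mul _ h]

theorem re_conjTranspose_mul_self_apply_le_l2OpNorm'_sq (A : Matrix n n ℂ) (i : n) :
    ((Aᴴ * A) i i).re ≤ l2OpNorm' A ^ 2 := by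
  have h := (toEuclideanCLM (𝕜 := ℂ) A).le_opNorm (EuclideanSpace.single i 1)
  rw [PiLp.norm_single, norm_one, mul_one] at h
  calc ((Aᴴ * A) i i).re = ‖toEuclideanCLM (𝕜 := ℂ) A (EuclideanSpace.single i 1)‖ ^ 2 := by
        rw [← star_single_dotProduct_mulVec_single (Aᴴ * A), ← mulVec_mulVec, dotProduct_mulVec,
          ← star_mulVec, @norm_sq_eq_re_inner ℂ, EuclideanSpace.single, ← PiLp.toLp_single,
          toEuclideanCLM_toLp, EuclideanSpace.inner_toLp_toLp, dotProduct_comm, RCLike.re_to_complex]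
    _ ≤ l2OpNorm' A ^ 2 := pow_le_pow_left₀ (norm_nonneg _) h 2

end Matrix

theorem two_mul_sub_sq_le_one_div_one_add_sq {η N : ℝ} (hη₀ : 0 < η) (hη₁ : η < 1) (hN : 0 ≤ N)
    (h : N ≤ (1 - η) / √(1 - (1 - η) ^ 2)) : 2 * η - η ^ 2 ≤ 1 / (1 + N ^ 2) := by
  have hs : 0 < 1 - (1 - η) ^ 2 := by nlinarith
  have hN2 : N ^ 2 * (1 - (1 - η) ^ 2) ≤ (1 - η) ^ 2 := by
    have := pow_le_pow_left₀ hN h 2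
    rwa [div_pow, Real.sq_sqrt hs.le, le_div_iff₀ hs] at this
  rw [le_div_iff₀ (by positivity)]
  nlinarith

/-- For a skew-Hermitian matrix `Ξ`, the matrix `I − Ξ²` is Hermitian positive
definite, `a₀ := e₀ᵀ(I−Ξ²)⁻¹e₀` is real with `a₀ ≥ 1/(1+‖Ξ‖²)`, and
`|e₀ᵀ(I−Ξ²)⁻¹Ξe₀| ≤ 1`.  Moreover if `0 < η < 1` and `‖Ξ‖ ≤ (1−η)/√(1−(1−η)²)` then
`a₀ ≥ 2η − η² ≥ η`. -/
theorem stmt15 (m : ℕ) (hm : 1 ≤ m) (Ξ : Matrix (Fin m) (Fin m) ℂ)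
    (hskew : Ξᴴ = -Ξ) :
    (1 - Ξ^2).PosDef ∧
    (((1 - Ξ^2 : Matrix (Fin m) (Fin m) ℂ)⁻¹) ⟨0, hm⟩ ⟨0, hm⟩).im = 0 ∧
    1 / (1 + (l2OpNorm' Ξ)^2)
      ≤ (((1 - Ξ^2 : Matrix (Fin m) (Fin m) ℂ)⁻¹) ⟨0, hm⟩ ⟨0, hm⟩).re ∧
    ‖(((1 - Ξ^2 : Matrix (Fin m) (Fin m) ℂ)⁻¹ * Ξ)) ⟨0, hm⟩ ⟨0, hm⟩‖ ≤ 1 ∧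
    (∀ η : ℝ, 0 < η → η < 1 →
      l2OpNorm' Ξ ≤ (1 - η) / Real.sqrt (1 - (1 - η)^2) →
      2*η - η^2 ≤ (((1 - Ξ^2 : Matrix (Fin m) (Fin m) ℂ)⁻¹) ⟨0, hm⟩ ⟨0, hm⟩).re ∧
      η ≤ 2*η - η^2) := by
  set i : Fin m := ⟨0, hm⟩
  set B : Matrix (Fin m) (Fin m) ℂ := 1 - Ξ ^ 2
  set P := B⁻¹
  have hB : B = 1 + Ξᴴ * Ξ := by rw [hskew, neg_mul, ← sq, ← sub_eq_add_neg]
  have hBpos : B.PosDef := hB ▸ PosDef.one.add_posSemidef (posSemidef_conjTranspose_mul_self Ξ)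
  have hP : P.PosDef := hBpos.inv
  obtain ⟨hPii_pos, hPii_im⟩ := Complex.pos_iff.mp (hP.diag_pos (i := i))
  have hBii_le : (B i i).re ≤ 1 + l2OpNorm' Ξ ^ 2 := by
    rw [hB, Matrix.add_apply, one_apply_eq, Complex.add_re, Complex.one_re]
    exact add_le_add_right (re_conjTranspose_mul_self_apply_le_l2OpNorm'_sq Ξ i) 1
  have ha : 1 / (1 + l2OpNorm' Ξ ^ 2) ≤ (P i i).re := by
    have h := hBpos.one_le_re_apply_mul_re_inv_apply i
    rw [RCLike.re_to_complex, RCLike.re_to_complex] at h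
    rw [div_le_iff₀ (by positivity), mul_comm]
    exact h.trans (mul_le_mul_of_nonneg_right hBii_le hPii_pos.le)
  have hXPX : Ξᴴ * P * Ξ = 1 - P := by
    rw [hskew, neg_mul, neg_mul,
      mul_inv_one_sub_sq_mul Ξ ((isUnit_iff_isUnit_det B).mp hBpos.isUnit), neg_sub]
  have hoff : ‖(P * Ξ) i i‖ ≤ 1 := by
    have h := hP.posSemidef.norm_mul_apply_sq_le Ξ i i
    rw [hXPX, Matrix.sub_apply, one_apply_eq] at h
    simp only [RCLike.re_to_complex, Complex.sub_re, Complex.one_re] at h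
    nlinarith [norm_nonneg ((P * Ξ) i i), sq_nonneg ((P i i).re - 1 / 2)]
  exact ⟨hBpos, hPii_im.symm, ha, hoff, fun η hη₀ hη₁ hN =>
    ⟨(two_mul_sub_sq_le_one_div_one_add_sq hη₀ hη₁ (norm_nonneg _) hN).trans ha, by nlinarith⟩⟩
end
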